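/- Let α ∈ (0,1) and β ∈ (2/(1+α), β*(α)], where β*(α) = (2/(1−α))·arctanh(t*)/t* and t* ∈ (0,1) is the unique solution of (1−t²)·arctanh(t)/t = (1−α)/(1+α). Then the set of global maximizers of G_{α,β} on [−1,1]² is exactly {(m_g,m_g), (−m_g,−m_g)}, where m_g is the unique positive solution of m = tanh((β/2)(1+α)m), and both points are local maxima of G_{α,β} (the Hessian of G_{α,β} there is negative definite). -/

import Mathlib

open Filter

noncomputable section

/-- `E_α(m)`. -/
def Ebil (a : ℝ) (m : ℝ × ℝ) : ℝ := (m.1 ^ 2 + m.2 ^ 2) / 4 + (a / 2) * m.1 * m.2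

/-- One-dimensional entropy term. -/
def entI (x : ℝ) : ℝ :=
  ((1 + x) / 2) * Real.log ((1 + x) / 2) + ((1 - x) / 2) * Real.log ((1 - x) / 2)

/-- Free energy functional `G_{α,β}`. -/
def Gfun (a β : ℝ) (m : ℝ × ℝ) : ℝ := β * Ebil a m - (entI m.1 + entI m.2)

/-- Inverse hyperbolic tangent. -/
def arctanh (x : ℝ) : ℝ := (1 / 2) * Real.log ((1 + x) / (1 - x))

/-- The Hessian matrix of `G_{α,β}` at `m`. -/
def hessG (a β : ℝ) (m : ℝ × ℝ) : Matrix (Fin 2) (Fin 2) ℝ :=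
  !![β / 2 - 1 / (1 - m.1 ^ 2), β * a / 2; β * a / 2, β / 2 - 1 / (1 - m.2 ^ 2)]

/-- The square `[−1,1]²`. -/
def box : Set (ℝ × ℝ) := Set.Icc (-1 : ℝ) 1 ×ˢ Set.Icc (-1 : ℝ) 1

/-!
Writing `b = β(1 + α)/2` and `f_b(x) = b x²/2 - I(x)` for the Curie–Weiss free energy,
`G_{α,β}(m) = f_b(m₁) + f_b(m₂) - (βα/4)(m₁ - m₂)²`. For `α, β > 0` the coupling term is
maximised exactly on the diagonal, so the maximizers of `G` are the diagonal points `(x, x)`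
with `x` a maximizer of `f_b`. Since `f_b' = b x - artanh x` and `artanh` is strictly convex
on `[0, 1)` with `artanh 0 = 0`, the slope `artanh x / x` increases strictly; hence `f_b` rises
on `[0, m_g]` and falls on `[m_g, 1]`, where `artanh m_g = b m_g`, and its maximizers are `±m_g`.
The same convexity gives `b = artanh m_g / m_g < artanh' m_g = 1/(1 - m_g²)`, which is exactly
the negative definiteness of the Hessian at `±(m_g, m_g)`.
-/

open Set

namespace Real

lemma artanh_eq_half_log_sub {x : ℝ} (hx : x ∈ Ioo (-1) 1) :
    artanh x = 1 / 2 * (log (1 + x) - log (1 - x)) := by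
  rw [artanh_eq_half_log (Ioo_subset_Icc_self hx), log_div (by linarith [hx.1]) (by linarith [hx.2])]

lemma hasDerivAt_artanh {x : ℝ} (hx : x ∈ Ioo (-1) 1) :
    HasDerivAt artanh (1 / (1 - x ^ 2)) x := by
  have hp : 1 + x ≠ 0 := by linarith [hx.1]
  have hm : 1 - x ≠ 0 := by linarith [hx.2]
  have hlog := ((((hasDerivAt_id x).const_add 1).log hp).sub
    (((hasDerivAt_id x).const_sub 1).log hm)).const_mul (1 / 2)
  refine (hlog.congr_of_eventuallyEq ?_).congr_deriv ?_
  · filter_upwards [Ioo_mem_nhds hx.1 hx.2] with y hy using artanh_eq_half_log_sub hy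
  · rw [show 1 - x ^ 2 = (1 + x) * (1 - x) by ring]
    simp only [id]
    field_simp
    ring

lemma strictConvexOn_artanh : StrictConvexOn ℝ (Ico 0 1) artanh := by
  have hderiv : ∀ x ∈ Ico (0 : ℝ) 1, HasDerivAt artanh (1 / (1 - x ^ 2)) x :=
    fun x hx ↦ hasDerivAt_artanh ⟨by linarith [hx.1], hx.2⟩
  refine StrictMonoOn.strictConvexOn_of_deriv (convex_Ico 0 1)
    (fun x hx ↦ (hderiv x hx).continuousAt.continuousWithinAt) ?_
  rw [interior_Ico]
  intro x hx y hy hxy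
  rw [(hderiv x (Ioo_subset_Ico_self hx)).deriv, (hderiv y (Ioo_subset_Ico_self hy)).deriv]
  gcongr
  · nlinarith [hy.1, hy.2]
  · linarith [hx.1]

lemma strictMonoOn_artanh_div_self : StrictMonoOn (fun x ↦ artanh x / x) (Ioo 0 1) := by
  intro x hx y hy hxy
  simpa [artanh_zero] using strictConvexOn_artanh.secant_strict_mono (a := 0) ⟨le_rfl, one_pos⟩
    (Ioo_subset_Ico_self hx) (Ioo_subset_Ico_self hy) hx.1.ne' hy.1.ne' hxy

lemma artanh_div_self_lt {x : ℝ} (hx : x ∈ Ioo 0 1) : artanh x / x < 1 / (1 - x ^ 2) := by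
  simpa [slope_def_field, artanh_zero] using strictConvexOn_artanh.slope_lt_of_hasDerivAt
    ⟨le_rfl, one_pos⟩ (Ioo_subset_Ico_self hx) hx.1 (hasDerivAt_artanh ⟨by linarith [hx.1], hx.2⟩)

lemma artanh_div_self_of_eq_tanh {b m : ℝ} (hm : m ≠ 0) (hfix : m = tanh (b * m)) :
    artanh m / m = b := by
  rw [div_eq_iff hm]
  conv_lhs => rw [hfix]
  exact artanh_tanh _

end Real

open Real

lemma hasDerivAt_entI {x : ℝ} (hx : x ∈ Ioo (-1) 1) : HasDerivAt entI (artanh x) x := by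
  have hp : (1 + x) / 2 ≠ 0 := by linarith [hx.1]
  have hm : (1 - x) / 2 ≠ 0 := by linarith [hx.2]
  have h := ((hasDerivAt_mul_log hp).comp x (((hasDerivAt_id x).const_add 1).div_const 2)).add
    ((hasDerivAt_mul_log hm).comp x (((hasDerivAt_id x).const_sub 1).div_const 2))
  refine (h.congr_deriv ?_ :)
  rw [artanh_eq_half_log_sub hx, log_div (by linarith [hx.1]) two_ne_zero,
    log_div (by linarith [hx.2]) two_ne_zero]
  ring

lemma continuous_entI : Continuous entI :=
  (continuous_mul_log.comp (by fun_prop)).add (continuous_mul_log.comp (by fun_prop))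

lemma entI_neg (x : ℝ) : entI (-x) = entI x := by
  simp only [entI, sub_neg_eq_add, ← sub_eq_add_neg]
  ring

def cwFreeEnergy (b x : ℝ) : ℝ := b / 2 * x ^ 2 - entI x

section cwFreeEnergy

variable {b m x : ℝ}

lemma hasDerivAt_cwFreeEnergy (hx : x ∈ Ioo (-1) 1) :
    HasDerivAt (cwFreeEnergy b) (b * x - artanh x) x :=
  (((hasDerivAt_pow 2 x).const_mul (b / 2)).sub (hasDerivAt_entI hx)).congr_deriv (by ring)

lemma continuous_cwFreeEnergy : Continuous (cwFreeEnergy b) :=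
  (continuous_const.mul (continuous_pow 2)).sub continuous_entI

lemma cwFreeEnergy_abs (x : ℝ) : cwFreeEnergy b |x| = cwFreeEnergy b x := by
  rcases abs_choice x with h | h <;> simp [h, cwFreeEnergy, entI_neg]

lemma cwFreeEnergy_lt_of_abs_ne (hm : 0 < m) (hfix : m = tanh (b * m))
    (hx : x ∈ Icc (-1) 1) (hxm : |x| ≠ m) : cwFreeEnergy b x < cwFreeEnergy b m := by
  have hm1 : m < 1 := hfix ▸ tanh_lt_one _
  have hb := artanh_div_self_of_eq_tanh hm.ne' hfix
  have hderiv : ∀ y ∈ Ioo (0 : ℝ) 1, deriv (cwFreeEnergy b) y = y * (b - artanh y / y) := by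
    intro y hy
    rw [(hasDerivAt_cwFreeEnergy ⟨by linarith [hy.1], hy.2⟩).deriv]
    field_simp [hy.1.ne']
  have hmono : StrictMonoOn (cwFreeEnergy b) (Icc 0 m) := by
    refine strictMonoOn_of_deriv_pos (convex_Icc 0 m) continuous_cwFreeEnergy.continuousOn ?_
    rw [interior_Icc]
    intro y hy
    have hy1 : y ∈ Ioo (0 : ℝ) 1 := ⟨hy.1, hy.2.trans hm1⟩
    rw [hderiv y hy1, ← hb]
    exact mul_pos hy.1 (sub_pos.2 (strictMonoOn_artanh_div_self hy1 ⟨hm, hm1⟩ hy.2))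
  have hanti : StrictAntiOn (cwFreeEnergy b) (Icc m 1) := by
    refine strictAntiOn_of_deriv_neg (convex_Icc m 1) continuous_cwFreeEnergy.continuousOn ?_
    rw [interior_Icc]
    intro y hy
    have hy1 : y ∈ Ioo (0 : ℝ) 1 := ⟨hm.trans hy.1, hy.2⟩
    rw [hderiv y hy1, ← hb]
    exact mul_neg_of_pos_of_neg hy1.1 (sub_neg.2 (strictMonoOn_artanh_div_self ⟨hm, hm1⟩ hy1 hy.1))
  rw [← cwFreeEnergy_abs x]
  rcases hxm.lt_or_gt with h | h
  · exact hmono ⟨abs_nonneg x, h.le⟩ ⟨hm.le, le_rfl⟩ h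
  · exact hanti ⟨le_rfl, hm1.le⟩ ⟨h.le, abs_le.2 hx⟩ h

lemma cwFreeEnergy_le (hm : 0 < m) (hfix : m = tanh (b * m)) (hx : x ∈ Icc (-1) 1) :
    cwFreeEnergy b x ≤ cwFreeEnergy b m := by
  by_cases hxm : |x| = m
  · rw [← cwFreeEnergy_abs x, hxm]
  · exact (cwFreeEnergy_lt_of_abs_ne hm hfix hx hxm).le

end cwFreeEnergy

section Gfun

variable {α β m : ℝ}

lemma Gfun_eq_cwFreeEnergy (α β : ℝ) (x : ℝ × ℝ) :
    Gfun α β x = cwFreeEnergy (β / 2 * (1 + α)) x.1 + cwFreeEnergy (β / 2 * (1 + α)) x.2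
      - β * α / 4 * (x.1 - x.2) ^ 2 := by
  simp only [Gfun, Ebil, cwFreeEnergy]
  ring

lemma Gfun_neg (α β : ℝ) (x : ℝ × ℝ) : Gfun α β (-x) = Gfun α β x := by
  simp only [Gfun, Ebil, Prod.fst_neg, Prod.snd_neg, entI_neg]
  ring

lemma Gfun_le_Gfun_diag (hα : 0 ≤ α) (hβ : 0 ≤ β) (hm : 0 < m)
    (hfix : m = tanh (β / 2 * (1 + α) * m)) {x : ℝ × ℝ} (hx : x ∈ box) :
    Gfun α β x ≤ Gfun α β (m, m) := by
  rw [Gfun_eq_cwFreeEnergy, Gfun_eq_cwFreeEnergy]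
  have := cwFreeEnergy_le hm hfix hx.1
  have := cwFreeEnergy_le hm hfix hx.2
  have : 0 ≤ β * α / 4 * (x.1 - x.2) ^ 2 := by positivity
  simp only [sub_self]
  linarith

lemma Gfun_lt_Gfun_diag (hα : 0 < α) (hβ : 0 < β) (hm : 0 < m)
    (hfix : m = tanh (β / 2 * (1 + α) * m)) {x : ℝ × ℝ} (hx : x ∈ box)
    (hne₁ : x ≠ (m, m)) (hne₂ : x ≠ (-m, -m)) : Gfun α β x < Gfun α β (m, m) := by
  rw [Gfun_eq_cwFreeEnergy, Gfun_eq_cwFreeEnergy]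
  have h₁ := cwFreeEnergy_le hm hfix hx.1
  have h₂ := cwFreeEnergy_le hm hfix hx.2
  simp only [sub_self]
  obtain ⟨x₁, x₂⟩ := x
  by_cases hdiag : x₁ = x₂
  · subst hdiag
    have hne : |x₁| ≠ m := fun h ↦ by
      rcases (abs_eq hm.le).1 h with rfl | rfl
      exacts [hne₁ rfl, hne₂ rfl]
    have := cwFreeEnergy_lt_of_abs_ne hm hfix hx.1 hne
    simp only [sub_self]
    linarith
  · have : 0 < β * α / 4 * (x₁ - x₂) ^ 2 := by
      have := sub_ne_zero.2 hdiag
      positivity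
    dsimp only at h₁ h₂ ⊢
    linarith

lemma Gfun_maximizers_eq (hα : 0 < α) (hβ : 0 < β) (hm : 0 < m)
    (hfix : m = tanh (β / 2 * (1 + α) * m)) :
    {x | x ∈ box ∧ ∀ y ∈ box, Gfun α β y ≤ Gfun α β x} = {(m, m), (-m, -m)} := by
  have hm1 : m < 1 := hfix ▸ tanh_lt_one _
  have hbox_pos : (m, m) ∈ box := ⟨⟨by linarith, hm1.le⟩, ⟨by linarith, hm1.le⟩⟩
  have hbox_neg : (-m, -m) ∈ box := ⟨⟨by linarith, by linarith⟩, ⟨by linarith, by linarith⟩⟩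
  have hG_neg : Gfun α β (-m, -m) = Gfun α β (m, m) := Gfun_neg α β (m, m)
  ext x
  simp only [mem_ofPred_eq, mem_insert_iff, mem_singleton_iff]
  constructor
  · rintro ⟨hx, hmax⟩
    by_contra! hne
    exact (Gfun_lt_Gfun_diag hα hβ hm hfix hx hne.1 hne.2).not_ge (hmax _ hbox_pos)
  · rintro (rfl | rfl)
    · exact ⟨hbox_pos, fun y hy ↦ Gfun_le_Gfun_diag hα.le hβ.le hm hfix hy⟩
    · exact ⟨hbox_neg, fun y hy ↦ hG_neg ▸ Gfun_le_Gfun_diag hα.le hβ.le hm hfix hy⟩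

end Gfun

open Matrix in
lemma Matrix.posDef_of_fin_two {a b d : ℝ} (ha : 0 < a) (hdet : b ^ 2 < a * d) :
    (!![a, b; b, d] : Matrix (Fin 2) (Fin 2) ℝ).PosDef := by
  refine .of_dotProduct_mulVec_pos ?_ fun x hx ↦ ?_
  · ext i j
    fin_cases i <;> fin_cases j <;> rfl
  have hquad : star x ⬝ᵥ (!![a, b; b, d] *ᵥ x) = a * x 0 ^ 2 + 2 * b * x 0 * x 1 + d * x 1 ^ 2 := by
    simp only [dotProduct, Pi.star_apply, star_trivial, mulVec, of_apply, cons_val',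
      cons_val_fin_one, Fin.sum_univ_two, cons_val_zero, cons_val_one]
    ring
  rw [hquad]
  -- `a · (quadratic form) = (a x₀ + b x₁)² + (ad - b²) x₁²`
  by_cases hx1 : x 1 = 0
  · have hx0 : x 0 ≠ 0 := fun hx0 ↦ hx (by ext i; fin_cases i <;> simp [hx0, hx1])
    have := pow_pos (abs_pos.2 hx0) 2
    rw [sq_abs] at this
    simp only [hx1]
    nlinarith
  · have := pow_pos (abs_pos.2 hx1) 2
    rw [sq_abs] at this
    nlinarith [sq_nonneg (a * x 0 + b * x 1), mul_pos (sub_pos.2 hdet) this]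

lemma hessG_neg (α β : ℝ) (x : ℝ × ℝ) : hessG α β (-x) = hessG α β x := by
  simp [hessG]

lemma posDef_neg_hessG_diag {α β x : ℝ} (hα : 0 ≤ α) (hβ : 0 ≤ β)
    (hx : β / 2 * (1 + α) < 1 / (1 - x ^ 2)) : (-hessG α β (x, x)).PosDef := by
  have hneg : -hessG α β (x, x) = !![1 / (1 - x ^ 2) - β / 2, -(β * α / 2);
      -(β * α / 2), 1 / (1 - x ^ 2) - β / 2] := by
    simp [hessG]
  rw [hneg]
  have : 0 ≤ β * α := by positivity
  exact Matrix.posDef_of_fin_two (by nlinarith) (by nlinarith)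

theorem G_two_symmetric_maximizers_general
    (α β tstar mg : ℝ) (hα : α ∈ Set.Ioo (0 : ℝ) 1)
    (hβ : β ∈ Set.Ioc (2 / (1 + α)) ((2 / (1 - α)) * (arctanh tstar / tstar)))
    (hmg : 0 < mg) (hmgeq : mg = Real.tanh ((β / 2) * (1 + α) * mg)) :
    {m | m ∈ box ∧ ∀ m' ∈ box, Gfun α β m' ≤ Gfun α β m} =
        {((mg, mg) : ℝ × ℝ), (-mg, -mg)} ∧
      (-(hessG α β (mg, mg))).PosDef ∧ (-(hessG α β (-mg, -mg))).PosDef := by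
  have hβ₀ : 0 < β := lt_trans (by have := hα.1; positivity) hβ.1
  have hstable : β / 2 * (1 + α) < 1 / (1 - mg ^ 2) :=
    artanh_div_self_of_eq_tanh hmg.ne' hmgeq ▸ artanh_div_self_lt ⟨hmg, hmgeq ▸ tanh_lt_one _⟩
  have hhess := posDef_neg_hessG_diag hα.1.le hβ₀.le hstable
  refine ⟨Gfun_maximizers_eq hα.1 hβ₀ hmg hmgeq, hhess, ?_⟩
  rwa [show ((-mg, -mg) : ℝ × ℝ) = -(mg, mg) from rfl, hessG_neg]

/-- for `α ∈ (0,1)` and `β ∈ (2/(1+α), β*(α)]`, the set of global maximizers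
of `G_{α,β}` on `[−1,1]²` is exactly `{(m_g,m_g), (−m_g,−m_g)}`, and at both points the
Hessian of `G_{α,β}` is negative definite. -/
theorem G_two_symmetric_maximizers
    (α β tstar mg : ℝ) (hα : α ∈ Set.Ioo (0 : ℝ) 1)
    (ht : tstar ∈ Set.Ioo (0 : ℝ) 1)
    (hteq : (1 - tstar ^ 2) * arctanh tstar / tstar = (1 - α) / (1 + α))
    (hβ : β ∈ Set.Ioc (2 / (1 + α)) ((2 / (1 - α)) * (arctanh tstar / tstar)))
    (hmg : 0 < mg) (hmgeq : mg = Real.tanh ((β / 2) * (1 + α) * mg)) :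
    {m | m ∈ box ∧ ∀ m' ∈ box, Gfun α β m' ≤ Gfun α β m} =
        {((mg, mg) : ℝ × ℝ), (-mg, -mg)} ∧
      (-(hessG α β (mg, mg))).PosDef ∧ (-(hessG α β (-mg, -mg))).PosDef :=
  G_two_symmetric_maximizers_general α β tstar mg hα hβ hmg hmgeq

end
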